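/- arXiv:2509.24669 — 7 statements merged into one kernel-verified Lean document; each statement's English description precedes it below -/
import Mathlib

section
/- The quadratic equation in c² given by [(ρ₁H₂+ρ₂H₁)c² − g(ρ₂−ρ₁)H₁H₂][(ρ₂H₃+ρ₃H₂)c² − g(ρ₃−ρ₂)H₂H₃] − ρ₂²H₁H₃c⁴ = 0 has two distinct positive real roots c₀⁻² < c₀⁺² whenever 0 < ρ₁ < ρ₂ < ρ₃ and H₁, H₂, H₃ > 0. -/
/-!
Multiplying out, the equation in `x = c²` is the quadratic
`(A B - k) x² - (A Q + B P) x + P Q = 0` with `A = ρ₁H₂ + ρ₂H₁`, `B = ρ₂H₃ + ρ₃H₂`,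
`P = g(ρ₂ - ρ₁)H₁H₂`, `Q = g(ρ₃ - ρ₂)H₂H₃`, `k = ρ₂²H₁H₃`. Its leading coefficient
`A B - k = ρ₁ρ₂H₂H₃ + ρ₁ρ₃H₂² + ρ₂ρ₃H₁H₂` and its constant term `P Q` are positive, while at the
two-layer speed `x₀ = P / A` it takes the negative value `-k x₀²`. A quadratic that opens upwards,
is positive at `0` and negative at some `x₀ > 0` has two roots, one on each side of `x₀`, both
positive.
-/

theorem exists_two_pos_roots_of_quadratic {a b c x₀ : ℝ} (ha : 0 < a) (hc : 0 < c)
    (hx₀ : 0 < x₀) (hneg : a * x₀ ^ 2 + b * x₀ + c < 0) :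
    ∃ x y : ℝ, 0 < x ∧ x < y ∧ a * x ^ 2 + b * x + c = 0 ∧ a * y ^ 2 + b * y + c = 0 := by
  have hb : b < 0 := by nlinarith
  -- `discrim a b c = (2 a x₀ + b)² - 4 a (a x₀² + b x₀ + c)`
  have hdisc : 0 < discrim a b c := by
    rw [discrim]; nlinarith [sq_nonneg (2 * a * x₀ + b)]
  set s := √(discrim a b c)
  have hs : 0 < s := Real.sqrt_pos.mpr hdisc
  have hss : s ^ 2 = b ^ 2 - 4 * a * c := Real.sq_sqrt hdisc.le
  have hsb : s < -b := by nlinarith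
  have hroot : ∀ x, 2 * a * x = -b + s ∨ 2 * a * x = -b - s → a * x ^ 2 + b * x + c = 0 := by
    intro x hx
    refine mul_left_cancel₀ (mul_ne_zero four_ne_zero ha.ne') ?_
    rcases hx with hx | hx
    · linear_combination (2 * a * x + b + s) * hx + hss
    · linear_combination (2 * a * x + b - s) * hx + hss
  refine ⟨(-b - s) / (2 * a), (-b + s) / (2 * a), by positivity, ?_, ?_, ?_⟩
  · gcongr; linarith
  · exact hroot _ (.inr (by field_simp))
  · exact hroot _ (.inl (by field_simp))

theorem exists_two_pos_roots_linear_mul_linear_sub_sq {A B P Q k : ℝ} (hA : 0 < A) (hP : 0 < P) (hQ : 0 < Q)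
    (hk : 0 < k) (hkAB : k < A * B) :
    ∃ x y : ℝ, 0 < x ∧ x < y ∧
      (A * x - P) * (B * x - Q) - k * x ^ 2 = 0 ∧ (A * y - P) * (B * y - Q) - k * y ^ 2 = 0 := by
  have hneg : (A * B - k) * (P / A) ^ 2 + -(A * Q + B * P) * (P / A) + P * Q < 0 := by
    have hx₀ : (A * B - k) * (P / A) ^ 2 + -(A * Q + B * P) * (P / A) + P * Q
        = -k * (P / A) ^ 2 := by
      field_simp; ring
    rw [hx₀]
    have : 0 < k * (P / A) ^ 2 := by positivity
    linarith
  obtain ⟨x, y, hx, hxy, hfx, hfy⟩ := exists_two_pos_roots_of_quadratic (sub_pos.mpr hkAB)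
    (mul_pos hP hQ) (div_pos hP hA) hneg
  exact ⟨x, y, hx, hxy, by linear_combination hfx, by linear_combination hfy⟩

/-- The linear long wave speed equation for a three-layer fluid has two distinct
positive roots in `c²`. -/
theorem stmt_0 (ρ1 ρ2 ρ3 H1 H2 H3 g : ℝ)
    (hρ1 : 0 < ρ1) (hρ12 : ρ1 < ρ2) (hρ23 : ρ2 < ρ3)
    (hH1 : 0 < H1) (hH2 : 0 < H2) (hH3 : 0 < H3) (hg : 0 < g) :
    ∃ x y : ℝ, 0 < x ∧ x < y ∧
      ((ρ1*H2 + ρ2*H1) * x - g*(ρ2-ρ1)*H1*H2) *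
        ((ρ2*H3 + ρ3*H2) * x - g*(ρ3-ρ2)*H2*H3) - ρ2^2*H1*H3*x^2 = 0 ∧
      ((ρ1*H2 + ρ2*H1) * y - g*(ρ2-ρ1)*H1*H2) *
        ((ρ2*H3 + ρ3*H2) * y - g*(ρ3-ρ2)*H2*H3) - ρ2^2*H1*H3*y^2 = 0 := by
  have hρ2 : 0 < ρ2 := hρ1.trans hρ12
  have hρ3 : 0 < ρ3 := hρ2.trans hρ23
  have hρ21 : 0 < ρ2 - ρ1 := sub_pos.mpr hρ12
  have hρ32 : 0 < ρ3 - ρ2 := sub_pos.mpr hρ23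
  have hkAB : ρ2^2*H1*H3 < (ρ1*H2 + ρ2*H1) * (ρ2*H3 + ρ3*H2) := by
    have : 0 < ρ1*ρ2*H2*H3 + ρ1*ρ3*H2^2 + ρ2*ρ3*H1*H2 := by positivity
    linarith
  exact exists_two_pos_roots_linear_mul_linear_sub_sq (by positivity) (by positivity) (by positivity)
    (by positivity) hkAB
end

section
/- If c₀⁻² and c₀⁺² denote the two roots in c² of the linear long wave speed equation [(ρ₁H₂+ρ₂H₁)c² − g(ρ₂−ρ₁)H₁H₂][(ρ₂H₃+ρ₃H₂)c² − g(ρ₃−ρ₂)H₂H₃] − ρ₂²H₁H₃c⁴ = 0, then c₀⁻² < gH₁H₂(ρ₂−ρ₁)/(ρ₁H₂+ρ₂H₁) < c₀⁺². -/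
/-- A quadratic with positive leading coefficient is negative only strictly
between its two roots. -/
lemma quad_between (L M N U cm2 cp2 : ℝ) (hL : 0 < L) (hlt : cm2 < cp2)
    (hm : L*cm2^2 - M*cm2 + N = 0) (hp : L*cp2^2 - M*cp2 + N = 0)
    (hU : L*U^2 - M*U + N < 0) : cm2 < U ∧ U < cp2 := by
  have hne : cp2 - cm2 ≠ 0 := by intro h; nlinarith
  have h1 : (cp2 - cm2) * (L*(cm2+cp2) - M) = 0 := by linear_combination hp - hm
  have hM' : M = L*(cm2+cp2) := by
    rcases mul_eq_zero.mp h1 with h | h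
    · exact absurd h hne
    · linarith
  have hN' : N = L*(cm2*cp2) := by linear_combination hm + cm2 * hM'
  have hfact : L*((U-cm2)*(U-cp2)) < 0 := by
    have : L*((U-cm2)*(U-cp2)) = L*U^2 - M*U + N := by
      linear_combination U * hM' - hN'
    linarith [this ▸ hU]
  have hprod : (U-cm2)*(U-cp2) < 0 := by
    by_contra h
    push_neg at h
    nlinarith [mul_nonneg hL.le h]
  constructor
  · nlinarith
  · nlinarith

/-- The squared two-layer long wave speed of the upper interface lies strictly
between the two roots in `c²` of the linear long wave speed equation. -/
theorem stmt_1 (ρ1 ρ2 ρ3 H1 H2 H3 g cm2 cp2 : ℝ)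
    (hρ1 : 0 < ρ1) (hρ12 : ρ1 < ρ2) (hρ23 : ρ2 < ρ3)
    (hH1 : 0 < H1) (hH2 : 0 < H2) (hH3 : 0 < H3) (hg : 0 < g)
    (hlt : cm2 < cp2)
    (hm : ((ρ1*H2 + ρ2*H1) * cm2 - g*(ρ2-ρ1)*H1*H2) *
        ((ρ2*H3 + ρ3*H2) * cm2 - g*(ρ3-ρ2)*H2*H3) - ρ2^2*H1*H3*cm2^2 = 0)
    (hp : ((ρ1*H2 + ρ2*H1) * cp2 - g*(ρ2-ρ1)*H1*H2) *
        ((ρ2*H3 + ρ3*H2) * cp2 - g*(ρ3-ρ2)*H2*H3) - ρ2^2*H1*H3*cp2^2 = 0) :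
    cm2 < g*H1*H2*(ρ2-ρ1)/(ρ1*H2 + ρ2*H1) ∧
      g*H1*H2*(ρ2-ρ1)/(ρ1*H2 + ρ2*H1) < cp2 := by
  have hρ2 : 0 < ρ2 := hρ1.trans hρ12
  have ha : 0 < ρ1*H2 + ρ2*H1 := by positivity
  have hρ21 : 0 < ρ2 - ρ1 := by linarith
  have hρ3 : 0 < ρ3 := by linarith
  set L := (ρ1*H2 + ρ2*H1)*(ρ2*H3 + ρ3*H2) - ρ2^2*H1*H3 with hL_def
  set M := (ρ1*H2 + ρ2*H1)*(g*(ρ3-ρ2)*H2*H3) + (ρ2*H3 + ρ3*H2)*(g*(ρ2-ρ1)*H1*H2)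
    with hM_def
  set N := (g*(ρ2-ρ1)*H1*H2)*(g*(ρ3-ρ2)*H2*H3) with hN_def
  set U := g*H1*H2*(ρ2-ρ1)/(ρ1*H2 + ρ2*H1) with hU_def
  have hL : 0 < L := by
    have : L = ρ1*ρ2*H2*H3 + ρ1*ρ3*H2^2 + ρ2*ρ3*H1*H2 := by rw [hL_def]; ring
    rw [this]; positivity
  have hUpos : 0 < U := by
    rw [hU_def]
    have : 0 < g*H1*H2*(ρ2-ρ1) := by nlinarith [mul_pos (mul_pos (mul_pos hg hH1) hH2) hρ21]
    exact div_pos this ha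
  have hkey : L*U^2 - M*U + N = -(ρ2^2*H1*H3*U^2) := by
    rw [hL_def, hM_def, hN_def, hU_def]
    field_simp
    ring
  have hUneg : L*U^2 - M*U + N < 0 := by
    rw [hkey]
    have : 0 < ρ2^2*H1*H3*U^2 := by positivity
    linarith
  exact quad_between L M N U cm2 cp2 hL hlt
    (by rw [hL_def, hM_def, hN_def]; linear_combination hm)
    (by rw [hL_def, hM_def, hN_def]; linear_combination hp)
    hUneg
end

section
/- Under the Boussinesq approximation with equal density increments (δ = 1) and equal outer layer depths (H₁ = H₃), the mode-1 displacement ratio equals γ⁺ = 1, and consequently the KdV criticality condition H₁²H₂²γ³ + H₁²H₃²(1−γ)³ − H₂²H₃² = 0 is satisfied. -/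
/-- Boussinesq, equal density increments, equal outer depths: the mode-1
displacement ratio is `γ⁺ = 1` and criticality holds. -/
theorem stmt_4 (H1 H2 H3 g' γ : ℝ)
    (hH1 : 0 < H1) (hH2 : 0 < H2) (hH3 : H3 = H1) (hg : 0 < g')
    (hγ : γ = 1 + H2/H1 - g'*H2/(Real.sqrt (g'*H1))^2) :
    γ = 1 ∧ H1^2*H2^2*γ^3 + H1^2*H3^2*(1-γ)^3 - H2^2*H3^2 = 0 := by
  have hs : (Real.sqrt (g'*H1))^2 = g'*H1 :=
    Real.sq_sqrt (by positivity)
  have hγ1 : γ = 1 := by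
    rw [hγ, hs]
    field_simp
    ring
  exact ⟨hγ1, by subst hH3; rw [hγ1]; ring⟩
end

section
/- For every point (ζ₁,ζ₂) in the admissible region ℛ with ζ₂ ≠ 0 satisfying P(ζ₁,ζ₂) = 0, the quantity 2g(ρ₃−ρ₂)h₂²h₃²ζ₂/G₃(h₂,h₃) is positive, hence there exists a real c > 0 with c² equal to this quantity, making (ζ₁,ζ₂) a critical point of the potential V for that value of c. -/
/-!
Write `h₁ = H₁ - ζ₁`, `h₂ = ζ₁ - ζ₂ + H₂`, `h₃ = H₃ + ζ₂`. The partial derivatives of `V` are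
`∂V/∂ζ₁ = g(ρ₂-ρ₁)ζ₁ - c²G₁/(2h₁²h₂²)` and `∂V/∂ζ₂ = g(ρ₃-ρ₂)ζ₂ - c²G₃/(2h₂²h₃²)`, and
`P = (ρ₂-ρ₁)ζ₁h₁²G₃ - (ρ₃-ρ₂)ζ₂h₃²G₁` is the condition for the two critical point equations to
give the same `c²`. What remains is that `c²` is positive, i.e. that `ζ₂` and `G₃` have the same
sign on `P = 0`. Both `G`'s have the shape `(k² - K²)·(positive) + aK²(H² - h²)`. If `ζ₂ > 0` and
`G₃ ≤ 0`, this forces `h₂ > H₂`, i.e. `ζ₁ > ζ₂ > 0`, hence `h₁ < H₁` and `G₁ > 0`, and then the two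
terms of `P` have opposite strict signs; the case `ζ₂ < 0` is symmetric.
-/

/-- The geometric locus polynomial `P` of the critical points. -/
noncomputable def Pcurve (ρ1 ρ2 ρ3 H1 H2 H3 z1 z2 : ℝ) : ℝ :=
  (ρ2-ρ1) * z1 * (H1-z1)^2 *
    ((ρ3-ρ2)*(z1-z2+H2)^2*(H3+z2)^2 + ρ2*H2^2*(H3+z2)^2 - ρ3*H3^2*(z1-z2+H2)^2)
  - (ρ3-ρ2) * z2 * (H3+z2)^2 *
    ((ρ2-ρ1)*(H1-z1)^2*(z1-z2+H2)^2 + ρ1*H1^2*(z1-z2+H2)^2 - ρ2*H2^2*(H1-z1)^2)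

/-- The potential `V` of the MMCC3 travelling-wave system. -/
noncomputable def Vpot (ρ1 ρ2 ρ3 H1 H2 H3 g c z1 z2 : ℝ) : ℝ :=
  -(1/2)*c^2*(ρ2-ρ1 + ρ1*H1/(H1-z1))*z1 + (1/2)*(ρ2-ρ1)*g*z1^2
  - (1/2)*c^2*(ρ3-ρ2 - ρ3*H3/(H3+z2))*z2 + (1/2)*(ρ3-ρ2)*g*z2^2
  - (1/2)*c^2*ρ2*(H2/(z1-z2+H2))*(z2-z1)

namespace MMCC3

/-- `G₁(h₁,h₂) = G ρ₁ ρ₂ H₁ H₂ h₁ h₂` and `G₃(h₂,h₃) = G ρ₂ ρ₃ H₂ H₃ h₂ h₃`. -/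
def G (a b H K h k : ℝ) : ℝ := (b-a)*h^2*k^2 + a*H^2*k^2 - b*K^2*h^2

lemma G_eq (a b H K h k : ℝ) :
    G a b H K h k = (k^2 - K^2)*((b-a)*h^2 + a*H^2) + a*K^2*(H^2 - h^2) := by
  unfold G; ring

lemma G_pos_of_lt_of_le {a b H K h k : ℝ} (ha : 0 < a) (hab : a ≤ b) (hH : 0 < H)
    (hK : 0 ≤ K) (hKk : K < k) (hh : 0 ≤ h) (hhH : h ≤ H) : 0 < G a b H K h k := by
  have hA : 0 < (b-a)*h^2 + a*H^2 :=
    add_pos_of_nonneg_of_pos (mul_nonneg (sub_nonneg.2 hab) (sq_nonneg h)) (by positivity)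
  have hk : 0 < k^2 - K^2 := sub_pos.2 (pow_lt_pow_left₀ hKk hK two_ne_zero)
  have hHh : 0 ≤ H^2 - h^2 := sub_nonneg.2 (pow_le_pow_left₀ hh hhH 2)
  rw [G_eq]
  exact add_pos_of_pos_of_nonneg (mul_pos hk hA) (mul_nonneg (by positivity) hHh)

lemma G_neg_of_lt_of_le {a b H K h k : ℝ} (ha : 0 < a) (hab : a ≤ b) (hH : 0 < H)
    (hk : 0 ≤ k) (hkK : k < K) (hHh : H ≤ h) : G a b H K h k < 0 := by
  have hA : 0 < (b-a)*h^2 + a*H^2 :=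
    add_pos_of_nonneg_of_pos (mul_nonneg (sub_nonneg.2 hab) (sq_nonneg h)) (by positivity)
  have hk : k^2 - K^2 < 0 := sub_neg.2 (pow_lt_pow_left₀ hkK hk two_ne_zero)
  have hHh : H^2 - h^2 ≤ 0 := sub_nonpos.2 (pow_le_pow_left₀ hH.le hHh 2)
  rw [G_eq]
  exact add_neg_of_neg_of_nonpos (mul_neg_of_neg_of_pos hk hA)
    (mul_nonpos_of_nonneg_of_nonpos (by positivity) hHh)

variable {ρ1 ρ2 ρ3 H1 H2 H3 z1 z2 : ℝ}

lemma Pcurve_eq : Pcurve ρ1 ρ2 ρ3 H1 H2 H3 z1 z2 =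
    (ρ2-ρ1)*z1*(H1-z1)^2 * G ρ2 ρ3 H2 H3 (z1-z2+H2) (H3+z2)
      - (ρ3-ρ2)*z2*(H3+z2)^2 * G ρ1 ρ2 H1 H2 (H1-z1) (z1-z2+H2) :=
  rfl

lemma G_pos_of_Pcurve_eq_zero_of_pos (hρ1 : 0 < ρ1) (hρ12 : ρ1 < ρ2) (hρ23 : ρ2 < ρ3)
    (hH1 : 0 < H1) (hH2 : 0 < H2) (hH3 : 0 < H3) (hh1 : 0 < H1 - z1) (hh2 : 0 < z1 - z2 + H2)
    (hP : Pcurve ρ1 ρ2 ρ3 H1 H2 H3 z1 z2 = 0) (hz2 : 0 < z2) :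
    0 < G ρ2 ρ3 H2 H3 (z1-z2+H2) (H3+z2) := by
  by_contra! hG₃
  have hz12 : z2 < z1 := by
    by_contra! h
    exact hG₃.not_gt (G_pos_of_lt_of_le (hρ1.trans hρ12) hρ23.le hH2 hH3.le (by linarith)
      hh2.le (by linarith))
  have hG₁ : 0 < G ρ1 ρ2 H1 H2 (H1-z1) (z1-z2+H2) :=
    G_pos_of_lt_of_le hρ1 hρ12.le hH1 hH2.le (by linarith) hh1.le (by linarith)
  have hlhs : (ρ2-ρ1)*z1*(H1-z1)^2 * G ρ2 ρ3 H2 H3 (z1-z2+H2) (H3+z2) ≤ 0 :=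
    mul_nonpos_of_nonneg_of_nonpos
      (mul_nonneg (mul_nonneg (sub_nonneg.2 hρ12.le) (by linarith)) (sq_nonneg _)) hG₃
  have hrhs : 0 < (ρ3-ρ2)*z2*(H3+z2)^2 * G ρ1 ρ2 H1 H2 (H1-z1) (z1-z2+H2) :=
    mul_pos (mul_pos (mul_pos (sub_pos.2 hρ23) hz2) (pow_pos (by linarith) 2)) hG₁
  rw [Pcurve_eq] at hP
  linarith

lemma G_neg_of_Pcurve_eq_zero_of_neg (hρ1 : 0 < ρ1) (hρ12 : ρ1 < ρ2) (hρ23 : ρ2 < ρ3)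
    (hH1 : 0 < H1) (hH2 : 0 < H2) (hh2 : 0 < z1 - z2 + H2) (hh3 : 0 < H3 + z2)
    (hP : Pcurve ρ1 ρ2 ρ3 H1 H2 H3 z1 z2 = 0) (hz2 : z2 < 0) :
    G ρ2 ρ3 H2 H3 (z1-z2+H2) (H3+z2) < 0 := by
  by_contra! hG₃
  have hz12 : z1 < z2 := by
    by_contra! h
    exact hG₃.not_gt (G_neg_of_lt_of_le (hρ1.trans hρ12) hρ23.le hH2 hh3.le (by linarith)
      (by linarith))
  have hG₁ : G ρ1 ρ2 H1 H2 (H1-z1) (z1-z2+H2) < 0 :=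
    G_neg_of_lt_of_le hρ1 hρ12.le hH1 hh2.le (by linarith) (by linarith)
  have hlhs : (ρ2-ρ1)*z1*(H1-z1)^2 * G ρ2 ρ3 H2 H3 (z1-z2+H2) (H3+z2) ≤ 0 :=
    mul_nonpos_of_nonpos_of_nonneg
      (mul_nonpos_of_nonpos_of_nonneg
        (mul_nonpos_of_nonneg_of_nonpos (sub_nonneg.2 hρ12.le) (by linarith)) (sq_nonneg _)) hG₃
  have hrhs : 0 < (ρ3-ρ2)*z2*(H3+z2)^2 * G ρ1 ρ2 H1 H2 (H1-z1) (z1-z2+H2) :=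
    mul_pos_of_neg_of_neg
      (mul_neg_of_neg_of_pos (mul_neg_of_pos_of_neg (sub_pos.2 hρ23) hz2) (pow_pos hh3 2)) hG₁
  rw [Pcurve_eq] at hP
  linarith

lemma mul_G_pos_of_Pcurve_eq_zero (hρ1 : 0 < ρ1) (hρ12 : ρ1 < ρ2) (hρ23 : ρ2 < ρ3)
    (hH1 : 0 < H1) (hH2 : 0 < H2) (hH3 : 0 < H3) (hh1 : 0 < H1 - z1) (hh2 : 0 < z1 - z2 + H2)
    (hh3 : 0 < H3 + z2) (hz2 : z2 ≠ 0) (hP : Pcurve ρ1 ρ2 ρ3 H1 H2 H3 z1 z2 = 0) :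
    0 < z2 * G ρ2 ρ3 H2 H3 (z1-z2+H2) (H3+z2) := by
  rcases hz2.lt_or_gt with hneg | hpos
  · exact mul_pos_of_neg_of_neg hneg
      (G_neg_of_Pcurve_eq_zero_of_neg hρ1 hρ12 hρ23 hH1 hH2 hh2 hh3 hP hneg)
  · exact mul_pos hpos (G_pos_of_Pcurve_eq_zero_of_pos hρ1 hρ12 hρ23 hH1 hH2 hH3 hh1 hh2 hP hpos)

lemma hasDerivAt_Vpot_fst (ρ1 ρ2 ρ3 H1 H2 H3 g c z1 z2 : ℝ) (hh1 : H1 - z1 ≠ 0)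
    (hh2 : z1 - z2 + H2 ≠ 0) :
    HasDerivAt (fun x => Vpot ρ1 ρ2 ρ3 H1 H2 H3 g c x z2)
      ((ρ2-ρ1)*g*z1 - c^2 * G ρ1 ρ2 H1 H2 (H1-z1) (z1-z2+H2) / (2*(H1-z1)^2*(z1-z2+H2)^2))
      z1 := by
  have h1 : HasDerivAt (fun x => H1 - x) (-1) z1 := (hasDerivAt_id' z1).const_sub H1
  have h2 : HasDerivAt (fun x => x - z2 + H2) 1 z1 := ((hasDerivAt_id' z1).sub_const z2).add_const H2
  have hV := (((((hasDerivAt_const z1 (-(1/2)*c^2)).mul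
      ((hasDerivAt_const z1 (ρ2-ρ1)).add ((hasDerivAt_const z1 (ρ1*H1)).div h1 hh1))).mul
      (hasDerivAt_id' z1)).add ((hasDerivAt_pow 2 z1).const_mul ((1/2)*(ρ2-ρ1)*g))).sub_const
      ((1/2)*c^2*(ρ3-ρ2 - ρ3*H3/(H3+z2))*z2)).add_const ((1/2)*(ρ3-ρ2)*g*z2^2) |>.sub
    ((((hasDerivAt_const z1 H2).div h2 hh2).const_mul ((1/2)*c^2*ρ2)).mul
      ((hasDerivAt_id' z1).const_sub z2))
  refine hV.congr_deriv ?_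
  simp only [Pi.add_apply, Pi.mul_apply, Pi.div_apply, G]
  field_simp
  ring

lemma hasDerivAt_Vpot_snd (ρ1 ρ2 ρ3 H1 H2 H3 g c z1 z2 : ℝ) (hh2 : z1 - z2 + H2 ≠ 0)
    (hh3 : H3 + z2 ≠ 0) :
    HasDerivAt (fun y => Vpot ρ1 ρ2 ρ3 H1 H2 H3 g c z1 y)
      ((ρ3-ρ2)*g*z2 - c^2 * G ρ2 ρ3 H2 H3 (z1-z2+H2) (H3+z2) / (2*(z1-z2+H2)^2*(H3+z2)^2))
      z2 := by
  have h2 : HasDerivAt (fun y => z1 - y + H2) (-1) z2 :=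
    ((hasDerivAt_id' z2).const_sub z1).add_const H2
  have h3 : HasDerivAt (fun y => H3 + y) 1 z2 := (hasDerivAt_id' z2).const_add H3
  have hV := (((((hasDerivAt_const z2 ((1/2)*c^2)).mul
      ((hasDerivAt_const z2 (ρ3-ρ2)).sub ((hasDerivAt_const z2 (ρ3*H3)).div h3 hh3))).mul
      (hasDerivAt_id' z2)).const_sub
      (-(1/2)*c^2*(ρ2-ρ1 + ρ1*H1/(H1-z1))*z1 + (1/2)*(ρ2-ρ1)*g*z1^2)).add
      ((hasDerivAt_pow 2 z2).const_mul ((1/2)*(ρ3-ρ2)*g))).sub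
    ((((hasDerivAt_const z2 H2).div h2 hh2).const_mul ((1/2)*c^2*ρ2)).mul
      ((hasDerivAt_id' z2).sub_const z1))
  refine hV.congr_deriv ?_
  simp only [Pi.sub_apply, Pi.mul_apply, Pi.div_apply, G]
  field_simp
  ring

end MMCC3

open MMCC3

/-- Every point of `P = 0` in the admissible region with `ζ₂ ≠ 0` is a critical
point of the potential `V` for a real wave speed `c > 0` given by
`c² = 2g(ρ₃−ρ₂)h₂²h₃²ζ₂/G₃(h₂,h₃) > 0`. -/
theorem stmt_10 (ρ1 ρ2 ρ3 H1 H2 H3 g z1 z2 : ℝ)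
    (hρ1 : 0 < ρ1) (hρ12 : ρ1 < ρ2) (hρ23 : ρ2 < ρ3)
    (hH1 : 0 < H1) (hH2 : 0 < H2) (hH3 : 0 < H3) (hg : 0 < g)
    (hh1 : 0 < H1 - z1) (hh2 : 0 < z1 - z2 + H2) (hh3 : 0 < H3 + z2)
    (hz2 : z2 ≠ 0)
    (hP : Pcurve ρ1 ρ2 ρ3 H1 H2 H3 z1 z2 = 0) :
    0 < 2*g*(ρ3-ρ2)*(z1-z2+H2)^2*(H3+z2)^2*z2 /
        ((ρ3-ρ2)*(z1-z2+H2)^2*(H3+z2)^2 + ρ2*H2^2*(H3+z2)^2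
          - ρ3*H3^2*(z1-z2+H2)^2) ∧
    ∃ c : ℝ, 0 < c ∧
      c^2 = 2*g*(ρ3-ρ2)*(z1-z2+H2)^2*(H3+z2)^2*z2 /
        ((ρ3-ρ2)*(z1-z2+H2)^2*(H3+z2)^2 + ρ2*H2^2*(H3+z2)^2
          - ρ3*H3^2*(z1-z2+H2)^2) ∧
      deriv (fun x => Vpot ρ1 ρ2 ρ3 H1 H2 H3 g c x z2) z1 = 0 ∧
      deriv (fun y => Vpot ρ1 ρ2 ρ3 H1 H2 H3 g c z1 y) z2 = 0 := by
  have hG₃ := mul_G_pos_of_Pcurve_eq_zero hρ1 hρ12 hρ23 hH1 hH2 hH3 hh1 hh2 hh3 hz2 hP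
  have hG₃ne : G ρ2 ρ3 H2 H3 (z1-z2+H2) (H3+z2) ≠ 0 := right_ne_zero_of_mul hG₃.ne'
  have hspeed : 0 < 2*g*(ρ3-ρ2)*(z1-z2+H2)^2*(H3+z2)^2*z2 / G ρ2 ρ3 H2 H3 (z1-z2+H2) (H3+z2) := by
    have hK : 0 < 2*g*(ρ3-ρ2)*(z1-z2+H2)^2*(H3+z2)^2 := by
      have := sub_pos.2 hρ23
      positivity
    refine div_pos_iff.2 (mul_pos_iff.1 ?_)
    simpa only [mul_assoc] using mul_pos hK hG₃
  obtain ⟨c, hc, hc2⟩ : ∃ c : ℝ, 0 < c ∧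
      c^2 = 2*g*(ρ3-ρ2)*(z1-z2+H2)^2*(H3+z2)^2*z2 / G ρ2 ρ3 H2 H3 (z1-z2+H2) (H3+z2) :=
    ⟨_, Real.sqrt_pos.2 hspeed, Real.sq_sqrt hspeed.le⟩
  have hc₃ : c^2 * G ρ2 ρ3 H2 H3 (z1-z2+H2) (H3+z2) = 2*g*(ρ3-ρ2)*(z1-z2+H2)^2*(H3+z2)^2*z2 := by
    rw [hc2, div_mul_cancel₀ _ hG₃ne]
  have hc₁ : c^2 * G ρ1 ρ2 H1 H2 (H1-z1) (z1-z2+H2) = 2*g*(ρ2-ρ1)*z1*(H1-z1)^2*(z1-z2+H2)^2 := by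
    refine mul_right_cancel₀ hG₃ne ?_
    rw [Pcurve_eq] at hP
    linear_combination G ρ1 ρ2 H1 H2 (H1-z1) (z1-z2+H2) * hc₃ - 2*g*(z1-z2+H2)^2 * hP
  refine ⟨hspeed, c, hc, hc2, ?_, ?_⟩
  · rw [(hasDerivAt_Vpot_fst ρ1 ρ2 ρ3 H1 H2 H3 g c z1 z2 hh1.ne' hh2.ne').deriv, hc₁]
    field_simp
    ring
  · rw [(hasDerivAt_Vpot_snd ρ1 ρ2 ρ3 H1 H2 H3 g c z1 z2 hh2.ne' hh3.ne').deriv, hc₃]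
    field_simp
    ring
end

section
/- Under the Boussinesq approximation, when δ = H₃/H₁, the curve P_B = 0 is degenerate: the polynomial P_B(ζ₁,ζ₂) = δζ₁h₁²(H₂²h₃² − H₃²h₂²) − ζ₂h₃²(H₁²h₂² − H₂²h₁²) is divisible by the linear polynomial H₁ζ₂ + H₃ζ₁. -/
/-- The Boussinesq geometric locus polynomial `P_B`. -/
noncomputable def PB (δ H1 H2 H3 z1 z2 : ℝ) : ℝ :=
  δ*z1*(H1-z1)^2*(H2^2*(H3+z2)^2 - H3^2*(z1-z2+H2)^2)
    - z2*(H3+z2)^2*(H1^2*(z1-z2+H2)^2 - H2^2*(H1-z1)^2)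

/-- For `δ = H₃/H₁` the curve `P_B = 0` is degenerate: `P_B` is divisible by the
linear polynomial `H₁ζ₂ + H₃ζ₁`, i.e. the line `ζ₂ = −(H₃/H₁)ζ₁` is a component
of `P_B = 0`. -/
theorem stmt_11 (H1 H2 H3 : ℝ) (hH1 : 0 < H1) (hH2 : 0 < H2) (hH3 : 0 < H3) :
    ∃ q : ℝ → ℝ → ℝ, Continuous (fun p : ℝ × ℝ => q p.1 p.2) ∧
      ∀ z1 z2 : ℝ, PB (H3/H1) H1 H2 H3 z1 z2 = (H1*z2 + H3*z1) * q z1 z2 := by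
  have h1 : H1 ≠ 0 := ne_of_gt hH1
  refine ⟨fun z1 z2 => (-H3^2*z1^2*z2^2 + 2*H3^2*z1^3*z2 - H3^2*z1^4 + 2*H2*H3^2*z1^2*z2
      - 2*H2*H3^2*z1^3 + H2^2*z1^2*z2^2 + 2*H2^2*H3*z1^2*z2 + H1*H3*z1*z2^3
      - 2*H1*H3*z1^2*z2^2 + H1*H3*z1^3*z2 + 2*H1*H3^2*z1*z2^2 - 4*H1*H3^2*z1^2*z2
      + 2*H1*H3^2*z1^3 - 2*H1*H2*H3*z1*z2^2 + 2*H1*H2*H3*z1^2*z2 - 4*H1*H2*H3^2*z1*z2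
      + 4*H1*H2*H3^2*z1^2 - 2*H1*H2^2*z1*z2^2 - 3*H1*H2^2*H3*z1*z2 - H1^2*z2^4
      + 2*H1^2*z1*z2^3 - H1^2*z1^2*z2^2 - 2*H1^2*H3*z2^3 + 4*H1^2*H3*z1*z2^2
      - 2*H1^2*H3*z1^2*z2 - H1^2*H3^2*z2^2 + 2*H1^2*H3^2*z1*z2 - H1^2*H3^2*z1^2
      + 2*H1^2*H2*z2^3 - 2*H1^2*H2*z1*z2^2 + 4*H1^2*H2*H3*z2^2 - 4*H1^2*H2*H3*z1*z2
      + 2*H1^2*H2*H3^2*z2 - 2*H1^2*H2*H3^2*z1) / H1, ?_, ?_⟩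
  · fun_prop
  · intro z1 z2
    unfold PB
    field_simp
    ring
end

section
/- Define the criticality polynomial Z(γ) = ρ₃H₁²H₂²γ³ + ρ₂H₁²H₃²(1−γ)³ − ρ₁H₂²H₃² and the multivariate polynomials W and T̃₁ as in the quadruple-collision analysis. Then the algebraic identity W − H₃T̃₁ = −5H₁H₃²(1−γ)Z holds identically in the variables (ρ₁, ρ₂, ρ₃, H₁, H₂, H₃, γ); in particular, when Z = 0, W = 0 if and only if T̃₁ = 0. -/
/-- The quadruple-collision polynomial identity `W − H₃T̃₁ = −5ρ₂H₁H₃²(1−γ)Z`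
(the factor `ρ₂` is 1 under the paper's normalisation `ρ₀ = 1`); in particular,
at criticality (`Z = 0`), `W = 0` if and only if `T̃₁ = 0`. -/
theorem stmt_16 (ρ1 ρ2 ρ3 H1 H2 H3 γ W T1t Z : ℝ)
    (hρ1 : 0 < ρ1) (hρ2 : 0 < ρ2) (hρ3 : 0 < ρ3)
    (hH1 : 0 < H1) (hH2 : 0 < H2) (hH3 : 0 < H3)
    (hW : W = -4*ρ2*ρ3*H1^3*H2^2*H3*(H2+H3)*γ^4 + 13*ρ2*ρ3*H1^3*H2^2*H3^2*γ^3
      - 9*H1*H2^2*H3^2*(ρ1*ρ2*H3^2 - ρ1*ρ3*H2^2 + ρ2*ρ3*H1^2)*γ^2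
      + 13*ρ1*ρ2*H1*H2^2*H3^4*γ - 4*ρ1*ρ2*H2^2*H3^4*(H1+H2))
    (hT : T1t = -(ρ2*H1^3*H2^3*H3^3) *
      (9*(H2/ρ2)*(ρ3*γ^2/H3^2 - ρ2*(1-γ)^2/H2^2)*(ρ2*(1-γ)^2/H2^2 - ρ1/H1^2)
        + 4*(ρ3*γ^4/H3^3 + ρ2*(1-γ)^4/H2^3 + ρ1/H1^3)))
    (hZ : Z = ρ3*H1^2*H2^2*γ^3 + ρ2*H1^2*H3^2*(1-γ)^3 - ρ1*H2^2*H3^2) :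
    W - H3*T1t = -5*ρ2*H1*H3^2*(1-γ)*Z ∧ (Z = 0 → (W = 0 ↔ T1t = 0)) := by
  have key : W - H3*T1t = -5*ρ2*H1*H3^2*(1-γ)*Z := by
    subst hW hT hZ
    field_simp
    ring
  refine ⟨key, fun h0 => ?_⟩
  have hne : H3 ≠ 0 := ne_of_gt hH3
  have hWT : W = H3 * T1t := by rw [h0] at key; linarith [key]
  constructor
  · intro h
    have : H3 * T1t = 0 := by linarith
    rcases mul_eq_zero.mp this with h' | h'
    · exact absurd h' hne
    · exact h'
  · intro h
    rw [hWT, h, mul_zero]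
end

section
/- If ρ₂/ρ₁ = ρ₃/ρ₂ and the layer depths satisfy H₂/H = −(1 + (ρ₃/ρ₁)^(1/2))·H₁/H + 1 with H = H₁+H₂+H₃, then the criticality condition ρ₃γ³/H₃² + ρ₂(1−γ)³/H₂² − ρ₁/H₁² = 0 is satisfied for the mode-1 displacement ratio γ = γ⁺. -/
/-!
With `ρ₂² = ρ₁ρ₃` the square root in the depth condition is `ρ₂/ρ₁`, so the condition says
`H₃ = (ρ₂/ρ₁) H₁`. Under these two relations the long wave dispersion relation factors as
`(ρ₁c² - g(ρ₂-ρ₁)H₁) · (((ρ₁+ρ₂)H₁ + ρ₁H₂)c² - g(ρ₂-ρ₁)H₁H₂)`, whose larger root is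
`c₀² = g(ρ₂-ρ₁)H₁/ρ₁`. At this speed `γ⁺ = 1`, so the criticality condition reduces to
`ρ₃/H₃² = ρ₁/H₁²`, which is again `H₃ = √(ρ₃/ρ₁) H₁`.
-/

open Real

def threeLayerDispersion (ρ1 ρ2 ρ3 H1 H2 H3 g c : ℝ) : ℝ :=
  ((ρ1*H2 + ρ2*H1)*c^2 - g*(ρ2-ρ1)*H1*H2) *
    ((ρ2*H3 + ρ3*H2)*c^2 - g*(ρ3-ρ2)*H2*H3) - ρ2^2*H1*H3*c^4

lemma sqrt_div_eq_div_of_sq_eq_mul {ρ1 ρ2 ρ3 : ℝ} (hρ1 : 0 < ρ1) (hρ2 : 0 ≤ ρ2)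
    (hρ : ρ2^2 = ρ1*ρ3) : √(ρ3/ρ1) = ρ2/ρ1 := by
  rw [show ρ3/ρ1 = (ρ2/ρ1)^2 by field_simp; linear_combination -hρ]
  exact sqrt_sq (by positivity)

/-- When `H₁ + H₂ + H₃ = 0` the hypothesis reads `0 = 1`, since division by zero gives `0`. -/
lemma eq_mul_of_depth_ratio {H1 H2 H3 s : ℝ}
    (h : H2/(H1+H2+H3) = -(1 + s) * (H1/(H1+H2+H3)) + 1) : H3 = s*H1 := by
  by_cases hH : H1 + H2 + H3 = 0
  · simp [hH] at h
  · field_simp at h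
    linarith

lemma mul_threeLayerDispersion_eq {ρ1 ρ2 ρ3 H1 H2 H3 g : ℝ} (hρ1 : ρ1 ≠ 0)
    (hρ : ρ2^2 = ρ1*ρ3) (hH : H3 = (ρ2/ρ1)*H1) (c : ℝ) :
    ρ1^2 * threeLayerDispersion ρ1 ρ2 ρ3 H1 H2 H3 g c =
      ρ2^2*H2 * ((ρ1*c^2 - g*(ρ2-ρ1)*H1) * (((ρ1+ρ2)*H1 + ρ1*H2)*c^2 - g*(ρ2-ρ1)*H1*H2)) := by
  have hρ3 : ρ3 = ρ2^2/ρ1 := by field_simp; linear_combination -hρ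
  subst hρ3 hH
  unfold threeLayerDispersion
  field_simp
  ring

lemma threeLayerDispersion_eq_zero_iff {ρ1 ρ2 ρ3 H1 H2 H3 g : ℝ} (hρ1 : ρ1 ≠ 0)
    (hρ2 : ρ2 ≠ 0) (hH2 : H2 ≠ 0) (hρ : ρ2^2 = ρ1*ρ3) (hH : H3 = (ρ2/ρ1)*H1) (c : ℝ) :
    threeLayerDispersion ρ1 ρ2 ρ3 H1 H2 H3 g c = 0 ↔
      (ρ1*c^2 - g*(ρ2-ρ1)*H1) * (((ρ1+ρ2)*H1 + ρ1*H2)*c^2 - g*(ρ2-ρ1)*H1*H2) = 0 := by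
  rw [← mul_right_inj' (pow_ne_zero 2 hρ1), mul_threeLayerDispersion_eq hρ1 hρ hH,
    mul_zero, mul_eq_zero_iff_left (by positivity)]

/-- `√(a/p)` is itself a positive root, and `b/q < a/p` rules out the second factor at `c0`. -/
lemma mul_sq_eq_of_greatest_root {p a q b c0 : ℝ} (hp : 0 < p) (ha : 0 < a) (hq : 0 < q)
    (hbq : b*p < a*q) (hroot : (p*c0^2 - a) * (q*c0^2 - b) = 0)
    (hmax : ∀ c : ℝ, 0 < c → (p*c^2 - a) * (q*c^2 - b) = 0 → c ≤ c0) :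
    p*c0^2 = a := by
  have hx : p * √(a/p)^2 = a := by
    rw [sq_sqrt (by positivity)]
    field_simp
  have hle : √(a/p) ≤ c0 := hmax _ (by positivity) (by rw [hx, sub_self, zero_mul])
  have hge : a ≤ p*c0^2 := by
    rw [← hx]
    gcongr
  rcases mul_eq_zero.mp hroot with h | h
  · linarith
  · nlinarith

lemma one_add_div_sub_div_eq_one {ρ1 ρ2 H1 H2 g c0 : ℝ} (hρ2 : ρ2 ≠ 0) (hH1 : H1 ≠ 0)
    (hc0 : c0 ≠ 0) (hc : ρ1*c0^2 = g*(ρ2-ρ1)*H1) :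
    1 + ρ1*H2/(ρ2*H1) - g*((ρ2-ρ1)/ρ2)*H2/c0^2 = 1 := by
  field_simp
  linear_combination H2 * hc

lemma div_sq_eq_div_sq_of_depth {ρ1 ρ2 ρ3 H1 H3 : ℝ} (hρ1 : ρ1 ≠ 0) (hρ2 : ρ2 ≠ 0)
    (hH1 : H1 ≠ 0) (hρ : ρ2^2 = ρ1*ρ3) (hH : H3 = (ρ2/ρ1)*H1) :
    ρ3/H3^2 = ρ1/H1^2 := by
  subst hH
  field_simp
  linear_combination -hρ

theorem stmt_17_general (ρ1 ρ2 ρ3 H1 H2 H3 g c0 γ : ℝ)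
    (hρ1 : 0 < ρ1) (hρ12 : ρ1 < ρ2)
    (hρ : ρ2^2 = ρ1*ρ3)
    (hH1 : 0 < H1) (hH2 : 0 < H2) (hg : 0 < g)
    (hdepth : H2/(H1+H2+H3)
      = -(1 + Real.sqrt (ρ3/ρ1)) * (H1/(H1+H2+H3)) + 1)
    (hroot : ((ρ1*H2 + ρ2*H1)*c0^2 - g*(ρ2-ρ1)*H1*H2) *
        ((ρ2*H3 + ρ3*H2)*c0^2 - g*(ρ3-ρ2)*H2*H3) - ρ2^2*H1*H3*c0^4 = 0)
    (hmax : ∀ c : ℝ, 0 < c →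
      ((ρ1*H2 + ρ2*H1)*c^2 - g*(ρ2-ρ1)*H1*H2) *
        ((ρ2*H3 + ρ3*H2)*c^2 - g*(ρ3-ρ2)*H2*H3) - ρ2^2*H1*H3*c^4 = 0 → c ≤ c0)
    (hγ : γ = 1 + ρ1*H2/(ρ2*H1) - g*((ρ2-ρ1)/ρ2)*H2/c0^2) :
    ρ3*γ^3/H3^2 + ρ2*(1-γ)^3/H2^2 - ρ1/H1^2 = 0 := by
  have hρ2 : 0 < ρ2 := hρ1.trans hρ12
  have hH3 : H3 = (ρ2/ρ1)*H1 := by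
    rw [sqrt_div_eq_div_of_sq_eq_mul hρ1 hρ2.le hρ] at hdepth
    exact eq_mul_of_depth_ratio hdepth
  have hfactor := threeLayerDispersion_eq_zero_iff hρ1.ne' hρ2.ne' hH2.ne' hρ hH3 (g := g)
  have ha : 0 < g*(ρ2-ρ1)*H1 := by have := sub_pos.mpr hρ12; positivity
  have hspeed : ρ1*c0^2 = g*(ρ2-ρ1)*H1 := by
    refine mul_sq_eq_of_greatest_root hρ1 ha (by positivity) ?_ ((hfactor c0).mp hroot)
      fun c hc hc' => hmax c hc ((hfactor c).mpr hc')
    linarith [mul_pos (mul_pos ha hH1) (add_pos hρ1 hρ2)]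
  have hc0 : c0 ≠ 0 := by
    rintro rfl
    linarith
  rw [hγ, one_add_div_sub_div_eq_one hρ2.ne' hH1.ne' hc0 hspeed]
  simpa [sub_eq_zero] using div_sq_eq_div_sq_of_depth hρ1.ne' hρ2.ne' hH1.ne' hρ hH3

/-- If `ρ₂/ρ₁ = ρ₃/ρ₂` and `H₂/H = −(1+√(ρ₃/ρ₁))H₁/H + 1`, the KdV criticality
condition holds for the mode-1 displacement ratio `γ⁺` (defined from the larger
root of the linear long wave speed equation). -/
theorem stmt_17 (ρ1 ρ2 ρ3 H1 H2 H3 g c0 γ : ℝ)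
    (hρ1 : 0 < ρ1) (hρ12 : ρ1 < ρ2) (hρ23 : ρ2 < ρ3)
    (hρ : ρ2^2 = ρ1*ρ3)
    (hH1 : 0 < H1) (hH2 : 0 < H2) (hH3 : 0 < H3) (hg : 0 < g)
    (hdepth : H2/(H1+H2+H3)
      = -(1 + Real.sqrt (ρ3/ρ1)) * (H1/(H1+H2+H3)) + 1)
    (hc0 : 0 < c0)
    (hroot : ((ρ1*H2 + ρ2*H1)*c0^2 - g*(ρ2-ρ1)*H1*H2) *
        ((ρ2*H3 + ρ3*H2)*c0^2 - g*(ρ3-ρ2)*H2*H3) - ρ2^2*H1*H3*c0^4 = 0)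
    (hmax : ∀ c : ℝ, 0 < c →
      ((ρ1*H2 + ρ2*H1)*c^2 - g*(ρ2-ρ1)*H1*H2) *
        ((ρ2*H3 + ρ3*H2)*c^2 - g*(ρ3-ρ2)*H2*H3) - ρ2^2*H1*H3*c^4 = 0 → c ≤ c0)
    (hγ : γ = 1 + ρ1*H2/(ρ2*H1) - g*((ρ2-ρ1)/ρ2)*H2/c0^2) :
    ρ3*γ^3/H3^2 + ρ2*(1-γ)^3/H2^2 - ρ1/H1^2 = 0 :=
  stmt_17_general ρ1 ρ2 ρ3 H1 H2 H3 g c0 γ hρ1 hρ12 hρ hH1 hH2 hg hdepth hroot hmax hγ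
end
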